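/- arXiv:1206.2815 — 4 statements merged into one kernel-verified Lean document; each statement's English description precedes it below -/
import Mathlib

section
/- Let N be a positive integer and let φ : [log N, ∞) → ℂ be measurable with ‖φ‖₂² = ∫_{log N}^∞ |φ(ξ)|² dξ < ∞. Then there exist coefficients a : ℕ → ℂ with a_n = 0 for n < N and ∑_{n≥N} |a_n|² ≤ ‖φ‖₂², such that the function Φ(s) = ∫_{log N}^∞ φ(ξ) e^{−(s−1/2)ξ} dξ − ∑_{n=N}^∞ a_n n^{−s} satisfies |Φ(s)| ≤ 2 |s − 1/2| N^{−Re s − 1/2} ‖φ‖₂ for every s with Re s > 1/2. -/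
/-!
Cut `[log N, ∞)` into the cells `[log n, log (n + 1))`, `n ≥ N`, of length at most `1 / n`, and
put `a n = √n ∫_{cell n} φ`. Since `√n n^{-s} = e^{-(s - 1/2) log n}`, the term `a n n^{-s}` is the
Laplace integral over the cell with the exponential frozen at the left endpoint. Cauchy–Schwarz on
a cell gives `|a n|² ≤ ∫_{cell n} |φ|²`, and, since the exponential moves by at most
`|s - 1/2| n^{-1} n^{1/2 - Re s}` across the cell, the error on the cell is at most
`|s - 1/2| n^{-Re s - 1} ‖φ‖_{L²(cell n)}`. Cauchy–Schwarz over `n`, with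
`∑_{n ≥ N} n^{-2} ≤ 2 / N`, sums these errors.
-/

open MeasureTheory Set Complex Function Filter

theorem Real.monotone_log_natCast : Monotone fun n : ℕ => Real.log n := by
  intro m n hmn
  rcases Nat.eq_zero_or_pos m with rfl | hm
  · simpa using Real.log_natCast_nonneg n
  · exact Real.log_le_log (by positivity) (by exact_mod_cast hmn)

theorem Real.log_natCast_add_one_sub_log_le {n : ℕ} (hn : n ≠ 0) :
    Real.log (n + 1 : ℕ) - Real.log n ≤ 1 / n := by
  have hn' : (0 : ℝ) < n := by positivity
  rw [← Real.log_div (by positivity) hn'.ne']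
  calc Real.log ((n + 1 : ℕ) / n) ≤ (n + 1 : ℕ) / n - 1 :=
        Real.log_le_sub_one_of_pos (by positivity)
    _ = 1 / n := by push_cast; field_simp; ring

theorem norm_cexp_neg_mul_le {r : ℂ} (hr : 0 ≤ r.re) {a t : ℝ} (hat : a ≤ t) :
    ‖cexp (-r * t)‖ ≤ ‖cexp (-r * a)‖ := by
  rw [Complex.norm_exp, Complex.norm_exp, Real.exp_le_exp]
  simp only [neg_mul, neg_re, re_mul_ofReal, neg_le_neg_iff]
  exact mul_le_mul_of_nonneg_left hat hr

theorem norm_cexp_neg_mul_sub_le {r : ℂ} (hr : 0 ≤ r.re) {a t : ℝ} (hat : a ≤ t) :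
    ‖cexp (-r * t) - cexp (-r * a)‖ ≤ ‖r‖ * (t - a) * ‖cexp (-r * a)‖ := by
  have hderiv (u : ℝ) : HasDerivAt (fun u : ℝ => cexp (-r * u)) (-r * cexp (-r * u)) u := by
    simpa [mul_comm] using (((hasDerivAt_id (u : ℂ)).const_mul (-r)).cexp).comp_ofReal
  have hbound : ∀ u ∈ Ico a t, ‖-r * cexp (-r * u)‖ ≤ ‖r‖ * ‖cexp (-r * a)‖ := fun u hu => by
    rw [norm_mul, norm_neg]
    exact mul_le_mul_of_nonneg_left (norm_cexp_neg_mul_le hr hu.1) (norm_nonneg r)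
  calc ‖cexp (-r * t) - cexp (-r * a)‖ ≤ ‖r‖ * ‖cexp (-r * a)‖ * (t - a) :=
        norm_image_sub_le_of_norm_deriv_le_segment' (fun u _ => (hderiv u).hasDerivWithinAt)
          hbound t ⟨hat, le_rfl⟩
    _ = ‖r‖ * (t - a) * ‖cexp (-r * a)‖ := by ring

theorem sqrt_mul_natCast_cpow_neg {n : ℕ} (hn : n ≠ 0) (s : ℂ) :
    (√n : ℂ) * (n : ℂ) ^ (-s) = cexp (-(s - 1 / 2) * Real.log n) := by
  have hn' : (n : ℂ) ≠ 0 := by exact_mod_cast hn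
  rw [Real.sqrt_eq_rpow, ofReal_cpow (Nat.cast_nonneg n), ofReal_natCast, ← cpow_add _ _ hn',
    cpow_def_of_ne_zero hn', ← natCast_log]
  congr 1
  push_cast
  ring

theorem integral_norm_le_sqrt_measureReal_mul_sqrt {α E : Type*} [MeasurableSpace α]
    [NormedAddCommGroup E] {μ : Measure α} [IsFiniteMeasure μ] {f : α → E} (hf : MemLp f 2 μ) :
    ∫ x, ‖f x‖ ∂μ ≤ √(μ.real univ) * √(∫ x, ‖f x‖ ^ 2 ∂μ) := by
  have h := integral_mul_le_Lp_mul_Lq_of_nonneg Real.HolderConjugate.two_two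
    (f := fun x => ‖f x‖) (g := fun _ => (1 : ℝ)) (.of_forall fun _ => norm_nonneg _)
    (.of_forall fun _ => zero_le_one) (by simpa using hf.norm) (memLp_const 1)
  simp only [mul_one, Real.rpow_two, one_pow, integral_const, smul_eq_mul] at h
  rw [mul_comm, Real.sqrt_eq_rpow, Real.sqrt_eq_rpow]
  exact h

theorem Real.sqrt_two_div_mul_rpow_neg_le {x : ℝ} (hx : 0 < x) (σ : ℝ) :
    √(2 / x) * x ^ (-σ) ≤ 2 * x ^ (-σ - 1 / 2) := by
  rw [Real.rpow_sub hx, ← Real.sqrt_eq_rpow, Real.sqrt_div' 2 hx.le, div_mul_eq_mul_div,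
    mul_div_assoc']
  gcongr
  rw [Real.sqrt_le_iff]
  norm_num

theorem summable_mul_and_tsum_mul_le_sqrt {ι : Type*} {f g : ι → ℝ} (hf₀ : ∀ i, 0 ≤ f i)
    (hg₀ : ∀ i, 0 ≤ g i) (hf : Summable fun i => f i ^ 2) (hg : Summable fun i => g i ^ 2) :
    (Summable fun i => f i * g i) ∧
      ∑' i, f i * g i ≤ √(∑' i, f i ^ 2) * √(∑' i, g i ^ 2) := by
  simpa [Real.sqrt_eq_rpow] using Real.summable_and_inner_le_Lp_mul_Lq_tsum_of_nonneg
    Real.HolderConjugate.two_two hf₀ hg₀ (by simpa using hf) (by simpa using hg)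

theorem tsum_comp_add_eq_of_eq_zero {M : Type*} [AddCommMonoid M] [TopologicalSpace M]
    {f : ℕ → M} {N : ℕ} (hf : ∀ n < N, f n = 0) : ∑' k, f (k + N) = ∑' n, f n :=
  (add_left_injective N).tsum_eq fun n hn =>
    ⟨n - N, Nat.sub_add_cancel (not_lt.1 fun h => hn (hf n h))⟩

theorem summable_inv_natCast_add_sq (N : ℕ) : Summable fun k : ℕ => (((k + N : ℕ) : ℝ) ^ 2)⁻¹ :=
  (summable_nat_add_iff N).2 (Real.summable_nat_pow_inv.2 one_lt_two)

open Finset in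
theorem tsum_inv_natCast_add_sq_le {N : ℕ} (hN : N ≠ 0) :
    ∑' k : ℕ, (((k + N : ℕ) : ℝ) ^ 2)⁻¹ ≤ 2 / N := by
  refine Real.tsum_le_of_sum_range_le (fun _ => by positivity) fun m => ?_
  calc ∑ k ∈ range m, (((k + N : ℕ) : ℝ) ^ 2)⁻¹ = ∑ i ∈ Ico N (m + N), ((i : ℝ) ^ 2)⁻¹ := by
        rw [range_eq_Ico, sum_Ico_add' (fun i : ℕ => ((i : ℝ) ^ 2)⁻¹), zero_add]
    _ ≤ ∑ i ∈ Ioo (N - 1) (m + N), ((i : ℝ) ^ 2)⁻¹ := by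
        refine sum_le_sum_of_subset_of_nonneg (fun i hi => ?_) fun _ _ _ => by positivity
        simp only [Finset.mem_Ico, Finset.mem_Ioo] at hi ⊢
        omega
    _ ≤ 2 / ((N - 1 : ℕ) + 1) := sum_Ioo_inv_sq_le _ _
    _ = 2 / N := by rw [Nat.cast_sub (Nat.one_le_iff_ne_zero.2 hN), Nat.cast_one, sub_add_cancel]

theorem MeasureTheory.MemLp.integrableOn_mul_cexp_neg_mul_Ici {f : ℝ → ℂ} {a : ℝ}
    (hf : MemLp f 2 (volume.restrict (Ici a))) {r : ℂ} (hr : 0 < r.re) :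
    IntegrableOn (fun ξ : ℝ => f ξ * cexp (-r * ξ)) (Ici a) := by
  have hsq : IntegrableOn (fun ξ : ℝ => ‖cexp (-r * ξ)‖ ^ 2) (Ici a) := by
    have h := (integrableOn_exp_mul_complex_Ioi (a := -(2 * r)) (by simpa using hr) a).norm
    refine (integrableOn_Ici_iff_integrableOn_Ioi (by simp)).2
      (IntegrableOn.congr_fun h (fun ξ _ => ?_) measurableSet_Ioi)
    rw [← norm_pow, ← Complex.exp_nat_mul]
    ring_nf
  exact hf.integrable_mul ((memLp_two_iff_integrable_sq_norm (by fun_prop)).2 hsq)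

theorem norm_setIntegral_Ico_mul_cexp_sub_le {f : ℝ → ℂ} {a b : ℝ}
    (hf : IntegrableOn f (Ico a b)) {r : ℂ} (hr : 0 ≤ r.re) :
    ‖(∫ ξ in Ico a b, f ξ * cexp (-r * ξ)) - (∫ ξ in Ico a b, f ξ) * cexp (-r * a)‖ ≤
      ‖r‖ * (b - a) * ‖cexp (-r * a)‖ * ∫ ξ in Ico a b, ‖f ξ‖ := by
  have hcont : Continuous fun ξ : ℝ => cexp (-r * ξ) := by fun_prop
  have hfe : IntegrableOn (fun ξ => f ξ * cexp (-r * ξ)) (Ico a b) :=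
    hf.mul_bdd hcont.aestronglyMeasurable
      (ae_restrict_of_forall_mem measurableSet_Ico fun ξ hξ => norm_cexp_neg_mul_le hr hξ.1)
  rw [← integral_mul_const, ← integral_sub hfe (hf.mul_const _), ← integral_const_mul]
  simp_rw [← mul_sub]
  refine norm_integral_le_of_norm_le (hf.norm.const_mul _)
    (ae_restrict_of_forall_mem measurableSet_Ico fun ξ hξ => ?_)
  rw [norm_mul, mul_comm]
  gcongr
  refine (norm_cexp_neg_mul_sub_le hr hξ.1).trans ?_
  gcongr
  exact hξ.2.le

def logCell (n : ℕ) : Set ℝ := Ico (Real.log n) (Real.log (n + 1 : ℕ))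

theorem measurableSet_logCell (n : ℕ) : MeasurableSet (logCell n) := measurableSet_Ico

instance (n : ℕ) : IsFiniteMeasure (volume.restrict (logCell n)) := by
  unfold logCell; infer_instance

theorem measureReal_logCell_le {n : ℕ} (hn : n ≠ 0) : volume.real (logCell n) ≤ 1 / n := by
  rw [logCell, Real.volume_real_Ico]
  exact max_le (Real.log_natCast_add_one_sub_log_le hn) (by positivity)

theorem logCell_subset_Ici {N n : ℕ} (h : N ≤ n) : logCell n ⊆ Ici (Real.log N) :=
  Ico_subset_Ici_self.trans (Ici_subset_Ici.2 (Real.monotone_log_natCast h))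

theorem pairwise_disjoint_logCell_add (N : ℕ) :
    Pairwise (Disjoint on fun k => logCell (k + N)) := by
  simpa [Function.comp_def, logCell, Nat.succ_eq_add_one, add_right_comm] using
    (Real.monotone_log_natCast.comp (add_left_mono (a := N))).pairwise_disjoint_on_Ico_succ

theorem iUnion_logCell_add (N : ℕ) : ⋃ k, logCell (k + N) = Ici (Real.log N) := by
  have hmono : Monotone fun k : ℕ => Real.log (k + N : ℕ) :=
    Real.monotone_log_natCast.comp (add_left_mono (a := N))
  have hunbdd : Tendsto (fun k : ℕ => Real.log (k + N : ℕ)) atTop atTop :=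
    Real.tendsto_log_atTop.comp (tendsto_natCast_atTop_atTop.comp (tendsto_add_atTop_nat N))
  simpa [logCell, Nat.succ_eq_add_one, add_right_comm] using
    iUnion_Ico_map_succ_eq_Ici (fun k => hmono (Nat.zero_le k))
      (not_bddAbove_of_tendsto_atTop hunbdd)

theorem hasSum_setIntegral_logCell {E : Type*} [NormedAddCommGroup E] [NormedSpace ℝ E] (N : ℕ)
    {g : ℝ → E} (hg : IntegrableOn g (Ici (Real.log N))) :
    HasSum (fun k => ∫ ξ in logCell (k + N), g ξ) (∫ ξ in Ici (Real.log N), g ξ) := by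
  rw [← iUnion_logCell_add N] at hg ⊢
  exact hasSum_integral_iUnion (fun _ => measurableSet_logCell _)
    (pairwise_disjoint_logCell_add N) hg

theorem sqrt_mul_integral_norm_logCell_le {E : Type*} [NormedAddCommGroup E] {n : ℕ} (hn : n ≠ 0)
    {f : ℝ → E} (hf : MemLp f 2 (volume.restrict (logCell n))) :
    √n * ∫ ξ in logCell n, ‖f ξ‖ ≤ √(∫ ξ in logCell n, ‖f ξ‖ ^ 2) := by
  have hn' : (0 : ℝ) < n := by positivity
  calc √n * ∫ ξ in logCell n, ‖f ξ‖
      ≤ √n * (√(1 / n) * √(∫ ξ in logCell n, ‖f ξ‖ ^ 2)) := by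
        gcongr
        refine (integral_norm_le_sqrt_measureReal_mul_sqrt hf).trans ?_
        rw [measureReal_restrict_apply_univ]
        gcongr
        exact measureReal_logCell_le hn
    _ = √(∫ ξ in logCell n, ‖f ξ‖ ^ 2) := by
        rw [← mul_assoc, ← Real.sqrt_mul hn'.le, mul_one_div_cancel hn'.ne', Real.sqrt_one,
          one_mul]

noncomputable def laplaceCoeff (N : ℕ) (φ : ℝ → ℂ) (n : ℕ) : ℂ :=
  if n < N then 0 else √n * ∫ ξ in logCell n, φ ξ

section laplaceCoeff

variable {N n : ℕ} {φ : ℝ → ℂ}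

theorem laplaceCoeff_of_lt (h : n < N) : laplaceCoeff N φ n = 0 := if_pos h

theorem laplaceCoeff_of_le (h : N ≤ n) : laplaceCoeff N φ n = √n * ∫ ξ in logCell n, φ ξ :=
  if_neg h.not_gt

theorem norm_laplaceCoeff_le (hn : n ≠ 0) (hφ : MemLp φ 2 (volume.restrict (logCell n))) :
    ‖laplaceCoeff N φ n‖ ≤ √(∫ ξ in logCell n, ‖φ ξ‖ ^ 2) := by
  rcases lt_or_ge n N with h | h
  · rw [laplaceCoeff_of_lt h, norm_zero]
    positivity
  · rw [laplaceCoeff_of_le h, norm_mul, norm_real, Real.norm_of_nonneg (Real.sqrt_nonneg _)]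
    calc √n * ‖∫ ξ in logCell n, φ ξ‖ ≤ √n * ∫ ξ in logCell n, ‖φ ξ‖ := by
          gcongr
          exact norm_integral_le_integral_norm _
      _ ≤ √(∫ ξ in logCell n, ‖φ ξ‖ ^ 2) := sqrt_mul_integral_norm_logCell_le hn hφ

theorem norm_setIntegral_logCell_sub_laplaceCoeff_mul_cpow_le (h : N ≤ n) (hn : n ≠ 0)
    (hφ : MemLp φ 2 (volume.restrict (logCell n))) {s : ℂ} (hs : 1 / 2 ≤ s.re) :
    ‖(∫ ξ in logCell n, φ ξ * cexp (-(s - 1 / 2) * ξ)) - laplaceCoeff N φ n * (n : ℂ) ^ (-s)‖ ≤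
      ‖s - 1 / 2‖ * ((n : ℝ) ^ (-s.re) / n) * √(∫ ξ in logCell n, ‖φ ξ‖ ^ 2) := by
  have hr : 0 ≤ (s - 1 / 2).re := by simpa using hs
  have hcoeff : laplaceCoeff N φ n * (n : ℂ) ^ (-s) =
      (∫ ξ in logCell n, φ ξ) * cexp (-(s - 1 / 2) * Real.log n) := by
    rw [laplaceCoeff_of_le h, mul_comm (√n : ℂ), mul_assoc, sqrt_mul_natCast_cpow_neg hn]
  have hexp : ‖cexp (-(s - 1 / 2) * Real.log n)‖ = (n : ℝ) ^ (-s.re) * √n := by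
    rw [← sqrt_mul_natCast_cpow_neg hn, norm_mul,
      norm_natCast_cpow_of_pos (Nat.pos_of_ne_zero hn), norm_real,
      Real.norm_of_nonneg (Real.sqrt_nonneg _), neg_re, mul_comm]
  rw [hcoeff]
  calc _ ≤ ‖s - 1 / 2‖ * (Real.log (n + 1 : ℕ) - Real.log n) *
          ‖cexp (-(s - 1 / 2) * Real.log n)‖ * ∫ ξ in logCell n, ‖φ ξ‖ :=
        norm_setIntegral_Ico_mul_cexp_sub_le (hφ.integrable one_le_two) hr
    _ ≤ ‖s - 1 / 2‖ * (1 / n) * ((n : ℝ) ^ (-s.re) * √n) * ∫ ξ in logCell n, ‖φ ξ‖ := by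
        rw [hexp]
        gcongr
        exact Real.log_natCast_add_one_sub_log_le hn
    _ = ‖s - 1 / 2‖ * ((n : ℝ) ^ (-s.re) / n) * (√n * ∫ ξ in logCell n, ‖φ ξ‖) := by ring
    _ ≤ _ := by
        gcongr
        exact sqrt_mul_integral_norm_logCell_le hn hφ

theorem MeasureTheory.MemLp.restrict_logCell (h : N ≤ n)
    (hφ : MemLp φ 2 (volume.restrict (Ici (Real.log N)))) :
    MemLp φ 2 (volume.restrict (logCell n)) :=
  hφ.mono_measure (Measure.restrict_mono (logCell_subset_Ici h) le_rfl)

theorem hasSum_sq_sqrt_setIntegral_logCell_norm_sq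
    (hφ : MemLp φ 2 (volume.restrict (Ici (Real.log N)))) :
    HasSum (fun k => √(∫ ξ in logCell (k + N), ‖φ ξ‖ ^ 2) ^ 2)
      (∫ ξ in Ici (Real.log N), ‖φ ξ‖ ^ 2) := by
  have hsq (k : ℕ) :
      √(∫ ξ in logCell (k + N), ‖φ ξ‖ ^ 2) ^ 2 = ∫ ξ in logCell (k + N), ‖φ ξ‖ ^ 2 :=
    Real.sq_sqrt (setIntegral_nonneg (measurableSet_logCell _) fun _ _ => sq_nonneg _)
  simpa only [hsq] using
    hasSum_setIntegral_logCell N ((memLp_two_iff_integrable_sq_norm hφ.1).1 hφ)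

theorem summable_and_tsum_norm_laplaceCoeff_sq_le (hN : N ≠ 0)
    (hφ : MemLp φ 2 (volume.restrict (Ici (Real.log N)))) :
    Summable (fun n => ‖laplaceCoeff N φ n‖ ^ 2) ∧
      ∑' n, ‖laplaceCoeff N φ n‖ ^ 2 ≤ ∫ ξ in Ici (Real.log N), ‖φ ξ‖ ^ 2 := by
  have hb := hasSum_sq_sqrt_setIntegral_logCell_norm_sq hφ
  have hle (k : ℕ) :
      ‖laplaceCoeff N φ (k + N)‖ ^ 2 ≤ √(∫ ξ in logCell (k + N), ‖φ ξ‖ ^ 2) ^ 2 := by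
    gcongr
    exact norm_laplaceCoeff_le (by omega) (hφ.restrict_logCell le_add_self)
  have hsum : Summable fun k => ‖laplaceCoeff N φ (k + N)‖ ^ 2 :=
    .of_nonneg_of_le (fun _ => sq_nonneg _) hle hb.summable
  refine ⟨(summable_nat_add_iff N).1 hsum, ?_⟩
  rw [← tsum_comp_add_eq_of_eq_zero fun n hn => by rw [laplaceCoeff_of_lt hn, norm_zero, sq,
    mul_zero], ← hb.tsum_eq]
  exact hsum.tsum_le_tsum hle hb.summable

theorem norm_setIntegral_Ici_sub_tsum_laplaceCoeff_le (hN : N ≠ 0)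
    (hφ : MemLp φ 2 (volume.restrict (Ici (Real.log N)))) {s : ℂ} (hs : 1 / 2 < s.re) :
    ‖(∫ ξ in Ici (Real.log N), φ ξ * cexp (-(s - 1 / 2) * ξ)) -
        ∑' n, laplaceCoeff N φ n * (n : ℂ) ^ (-s)‖ ≤
      2 * ‖s - 1 / 2‖ * (N : ℝ) ^ (-s.re - 1 / 2) * √(∫ ξ in Ici (Real.log N), ‖φ ξ‖ ^ 2) := by
  have hN' : (0 : ℝ) < N := by positivity
  set normSq := ∫ ξ in Ici (Real.log N), ‖φ ξ‖ ^ 2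
  set C := ‖s - 1 / 2‖ * (N : ℝ) ^ (-s.re)
  set w : ℕ → ℝ := fun k => ((k + N : ℕ) : ℝ)⁻¹
  set b : ℕ → ℝ := fun k => √(∫ ξ in logCell (k + N), ‖φ ξ‖ ^ 2)
  set D : ℕ → ℂ := fun k => (∫ ξ in logCell (k + N), φ ξ * cexp (-(s - 1 / 2) * ξ)) -
    laplaceCoeff N φ (k + N) * ((k + N : ℕ) : ℂ) ^ (-s)
  have hD (k : ℕ) : ‖D k‖ ≤ C * (w k * b k) := by
    refine (norm_setIntegral_logCell_sub_laplaceCoeff_mul_cpow_le le_add_self (by omega)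
      (hφ.restrict_logCell le_add_self) hs.le).trans ?_
    have : ((k + N : ℕ) : ℝ) ^ (-s.re) ≤ (N : ℝ) ^ (-s.re) :=
      Real.rpow_le_rpow_of_nonpos hN' (by exact_mod_cast le_add_self) (by linarith)
    simp only [C, w, b, div_eq_mul_inv, mul_assoc]
    gcongr
  have hb := hasSum_sq_sqrt_setIntegral_logCell_norm_sq hφ
  have hw : Summable fun k => w k ^ 2 := by
    simpa only [w, inv_pow] using summable_inv_natCast_add_sq N
  obtain ⟨hwb, hwb_le⟩ :=
    summable_mul_and_tsum_mul_le_sqrt (fun _ => by positivity) (fun _ => Real.sqrt_nonneg _) hw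
      hb.summable
  have hDsum : Summable fun k => ‖D k‖ :=
    .of_nonneg_of_le (fun _ => norm_nonneg _) hD (hwb.mul_left C)
  have hQ : HasSum (fun k => laplaceCoeff N φ (k + N) * ((k + N : ℕ) : ℂ) ^ (-s))
      ((∫ ξ in Ici (Real.log N), φ ξ * cexp (-(s - 1 / 2) * ξ)) - ∑' k, D k) := by
    have hr : 0 < (s - 1 / 2).re := by simpa using hs
    simpa [D] using (hasSum_setIntegral_logCell N
      (hφ.integrableOn_mul_cexp_neg_mul_Ici hr)).sub hDsum.of_norm.hasSum
  rw [← tsum_comp_add_eq_of_eq_zero fun n hn => by rw [laplaceCoeff_of_lt hn, zero_mul],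
    hQ.tsum_eq, sub_sub_cancel]
  calc ‖∑' k, D k‖ ≤ ∑' k, ‖D k‖ := norm_tsum_le_tsum_norm hDsum
    _ ≤ ∑' k, C * (w k * b k) := hDsum.tsum_le_tsum hD (hwb.mul_left C)
    _ = C * ∑' k, w k * b k := tsum_mul_left
    _ ≤ C * (√(2 / N) * √normSq) := by
        refine mul_le_mul_of_nonneg_left (hwb_le.trans ?_) (by positivity)
        rw [hb.tsum_eq]
        gcongr
        simpa only [w, inv_pow] using tsum_inv_natCast_add_sq_le hN
    _ = ‖s - 1 / 2‖ * (√(2 / N) * (N : ℝ) ^ (-s.re)) * √normSq := by ring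
    _ ≤ ‖s - 1 / 2‖ * (2 * (N : ℝ) ^ (-s.re - 1 / 2)) * √normSq := by
        gcongr ‖s - 1 / 2‖ * ?_ * _
        exact Real.sqrt_two_div_mul_rpow_neg_le hN' s.re
    _ = 2 * ‖s - 1 / 2‖ * (N : ℝ) ^ (-s.re - 1 / 2) * √normSq := by ring

end laplaceCoeff

/-- **Lemma 1.** Discretization of the Laplace transform: approximation of a function in
`H²(ℂ⁺_{1/2})` by a Dirichlet series with coefficients supported on `[N, ∞)`. -/
theorem laplace_discretization (N : ℕ) (hN : 1 ≤ N) (φ : ℝ → ℂ)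
    (hmeas : Measurable φ)
    (hL2 : IntegrableOn (fun ξ => ‖φ ξ‖ ^ 2) (Set.Ici (Real.log N))) :
    ∃ a : ℕ → ℂ, (∀ n, n < N → a n = 0) ∧
      Summable (fun n => ‖a n‖ ^ 2) ∧
      (∑' n : ℕ, ‖a n‖ ^ 2) ≤ (∫ ξ in Set.Ici (Real.log N), ‖φ ξ‖ ^ 2) ∧
      ∀ s : ℂ, 1 / 2 < s.re →
        ‖(∫ ξ in Set.Ici (Real.log N), φ ξ * Complex.exp (-(s - 1 / 2) * (ξ : ℂ))) -
            ∑' n : ℕ, a n * (n : ℂ) ^ (-s)‖ ≤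
          2 * ‖s - 1 / 2‖ * (N : ℝ) ^ (-s.re - 1 / 2) *
            Real.sqrt (∫ ξ in Set.Ici (Real.log N), ‖φ ξ‖ ^ 2) := by
  have hN₀ : N ≠ 0 := Nat.one_le_iff_ne_zero.1 hN
  have hφ : MemLp φ 2 (volume.restrict (Ici (Real.log N))) :=
    (memLp_two_iff_integrable_sq_norm hmeas.aestronglyMeasurable).2 hL2
  obtain ⟨hsum, hle⟩ := summable_and_tsum_norm_laplaceCoeff_sq_le hN₀ hφ
  exact ⟨laplaceCoeff N φ, fun _ => laplaceCoeff_of_lt, hsum, hle,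
    fun _ hs => norm_setIntegral_Ici_sub_tsum_laplaceCoeff_le hN₀ hφ hs⟩
end

section
/- There exists an absolute constant c′ > 0 (independent of R) with the following property. Let R ≥ 2, let Ω = Ω(R,2) = {σ + it ∈ ℂ : 1/2 ≤ σ ≤ 5/2, −R ≤ t ≤ R}, let ε > 0, and let g : ℂ → ℂ be a continuous function supported on Ω with |g(s)| ≤ ε for all s. Define u(s) = (1/π) ∫_Ω g(w)/(s − w) dm(w). Then for every σ ≥ 1/2, (∫_ℝ |u(σ + it)|² dt)^{1/2} ≤ c′ ε √R log R. -/
/-!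
Since `|g| ≤ ε`, `|u(s)| ≤ (ε / π) K(s)` with `K(s) = ∫_Ω dm(w) / |s - w|`, so it suffices to
bound `K` in `L²` on a vertical line. Write `t = Im s`. If `|t| ≤ 2R`, the unit disc around `s`
contributes `2π` to `K(s)` (polar coordinates), the rest of `Ω ∩ {|Im (s - w)| < 1}` has area
at most `4` and integrand at most `1`, and on the remaining part `1 / |s - w| ≤ 1 / |Im (s - w)|`
integrates to at most `4 log (3R)` over a rectangle of width `2`; hence `K(s) ≤ 40 log R`.
If `|t| > 2R`, every point of `Ω` is at distance at least `|t| / 2` from `s`, so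
`K(s) ≤ area(Ω) · 2 / |t| = 8R / |t|`. Integrating the square of this majorant over `t` gives
`∫ K² ≲ R log² R + R`.
-/

open MeasureTheory

/-- The rectangle `Ω(R, 2) = {σ + it : 1/2 ≤ σ ≤ 5/2, -R ≤ t ≤ R}`. -/
def OmegaRect (R : ℝ) : Set ℂ := {w : ℂ | 1 / 2 ≤ w.re ∧ w.re ≤ 5 / 2 ∧ |w.im| ≤ R}

open Set Metric
open scoped ENNReal

theorem lintegral_comp_abs (f : ℝ → ℝ≥0∞) : ∫⁻ x, f |x| = 2 * ∫⁻ x in Ioi 0, f x := by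
  have hpos : ∫⁻ x in Ioi 0, f |x| = ∫⁻ x in Ioi 0, f x :=
    setLIntegral_congr_fun measurableSet_Ioi fun x hx => by rw [abs_of_pos hx]
  have hneg : ∫⁻ x in Iic 0, f |x| = ∫⁻ x in Ioi 0, f x :=
    calc ∫⁻ x in Iic 0, f |x| = ∫⁻ x in (fun x => -x) ⁻¹' Ici 0, f |-x| := by simp
      _ = ∫⁻ x in Ici 0, f |x| :=
          (Measure.measurePreserving_neg volume).setLIntegral_comp_preimage_emb
            (MeasurableEquiv.neg ℝ).measurableEmbedding (fun x => f |x|) _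
      _ = ∫⁻ x in Ioi 0, f x := by rw [← Measure.restrict_congr_set Ioi_ae_eq_Ici, hpos]
  rw [← setLIntegral_univ, ← Iic_union_Ioi (a := (0 : ℝ)),
    lintegral_union measurableSet_Ioi (Iic_disjoint_Ioi le_rfl), hneg, hpos, two_mul]

theorem setLIntegral_Icc_ofReal_inv {a b : ℝ} (ha : 0 < a) (hab : a ≤ b) :
    ∫⁻ x in Icc a b, ENNReal.ofReal x⁻¹ = ENNReal.ofReal (Real.log (b / a)) := by
  have hint : IntegrableOn (fun x : ℝ => x⁻¹) (Ioc a b) :=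
    (continuousOn_inv₀.mono fun x hx => (ha.trans_le hx.1).ne').integrableOn_Icc.mono_set
      Ioc_subset_Icc_self
  rw [← Measure.restrict_congr_set Ioc_ae_eq_Icc, ← ofReal_integral_eq_lintegral_ofReal hint,
    ← intervalIntegral.integral_of_le hab, integral_inv_of_pos ha (ha.trans_le hab)]
  exact (ae_restrict_iff' measurableSet_Ioc).mpr
    (.of_forall fun x hx => inv_nonneg.mpr (ha.trans hx.1).le)

theorem measurableSet_abs_mem_Icc (a b : ℝ) : MeasurableSet {x : ℝ | |x| ∈ Icc a b} :=
  measurableSet_Icc.preimage continuous_abs.measurable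

theorem setLIntegral_abs_mem_Icc_enorm_inv {a b : ℝ} (ha : 0 < a) (hab : a ≤ b) :
    ∫⁻ x in {x : ℝ | |x| ∈ Icc a b}, ‖x‖ₑ⁻¹ = ENNReal.ofReal (2 * Real.log (b / a)) := by
  have hind : {x : ℝ | |x| ∈ Icc a b}.indicator (‖·‖ₑ⁻¹) =
      fun x => (Icc a b).indicator (fun r => ENNReal.ofReal r⁻¹) |x| := by
    ext x
    by_cases hx : |x| ∈ Icc a b
    · rw [indicator_of_mem hx, indicator_of_mem (show x ∈ {x : ℝ | |x| ∈ Icc a b} from hx),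
        ← ofReal_norm, Real.norm_eq_abs, ENNReal.ofReal_inv_of_pos (ha.trans_le hx.1)]
    · rw [indicator_of_notMem hx, indicator_of_notMem (show x ∉ {x : ℝ | |x| ∈ Icc a b} from hx)]
  rw [← lintegral_indicator (measurableSet_abs_mem_Icc a b), hind, lintegral_comp_abs,
    lintegral_indicator measurableSet_Icc, Measure.restrict_restrict measurableSet_Icc,
    inter_eq_left.mpr (Icc_subset_Ioi_iff hab |>.mpr ha), setLIntegral_Icc_ofReal_inv ha hab,
    ENNReal.ofReal_mul zero_le_two, ENNReal.ofReal_ofNat]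

theorem setLIntegral_Ioi_ofReal_inv_sq {c : ℝ} (hc : 0 < c) :
    ∫⁻ r in Ioi c, ENNReal.ofReal (r ^ 2)⁻¹ = ENNReal.ofReal c⁻¹ := by
  have hrpow : ∀ r ∈ Ioi c, ENNReal.ofReal (r ^ 2)⁻¹ = ENNReal.ofReal (r ^ (-2 : ℝ)) := by
    intro r hr
    rw [Real.rpow_neg (hc.trans hr).le, Real.rpow_ofNat]
  rw [setLIntegral_congr_fun measurableSet_Ioi hrpow,
    ← ofReal_integral_eq_lintegral_ofReal (integrableOn_Ioi_rpow_of_lt (by norm_num) hc),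
    integral_Ioi_rpow_of_lt (by norm_num) hc]
  · norm_num [Real.rpow_neg_one]
  · exact (ae_restrict_iff' measurableSet_Ioi).mpr
      (.of_forall fun r hr => Real.rpow_nonneg (hc.trans hr).le _)

theorem ENNReal.rpow_one_half_le_ofReal {x : ℝ≥0∞} {a : ℝ} (ha : 0 ≤ a)
    (h : x ≤ ENNReal.ofReal (a ^ 2)) : x ^ (1 / 2 : ℝ) ≤ ENNReal.ofReal a :=
  calc x ^ (1 / 2 : ℝ) ≤ ENNReal.ofReal (a ^ 2) ^ (1 / 2 : ℝ) := by gcongr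
    _ = ENNReal.ofReal a := by
        rw [ENNReal.ofReal_pow ha, ← ENNReal.rpow_two, ← ENNReal.rpow_mul]
        norm_num

theorem enorm_div_le_mul_enorm_inv {𝕜 : Type*} [NormedDivisionRing 𝕜] (a b : 𝕜) :
    ‖a / b‖ₑ ≤ ‖a‖ₑ * ‖b‖ₑ⁻¹ := by
  rcases eq_or_ne b 0 with rfl | hb
  · simp
  · rw [div_eq_mul_inv, enorm_mul, enorm_inv hb]

open Classical in
theorem Complex.setLIntegral_ball_zero_enorm_inv (ρ : ℝ) :
    ∫⁻ w in ball (0 : ℂ) ρ, ‖w‖ₑ⁻¹ = ENNReal.ofReal (2 * Real.pi * ρ) := by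
  have hpolar : ∀ p ∈ polarCoord.target, ENNReal.ofReal p.1 •
      (ball (0 : ℂ) ρ).indicator (‖·‖ₑ⁻¹) (Complex.polarCoord.symm p) =
        (Ioo 0 ρ ×ˢ Ioo (-Real.pi) Real.pi).indicator 1 p := by
    rintro ⟨r, θ⟩ ⟨hr : 0 < r, hθ⟩
    have hnorm : ‖Complex.polarCoord.symm (r, θ)‖ₑ = ENNReal.ofReal r := by
      rw [← ofReal_norm, Complex.norm_polarCoord_symm, abs_of_pos hr]
    rw [smul_eq_mul, indicator_apply, indicator_apply, mem_ball_zero_iff,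
      Complex.norm_polarCoord_symm, abs_of_pos hr, hnorm]
    simp [hθ, hr, ENNReal.mul_inv_cancel]
  have hsub : Ioo 0 ρ ×ˢ Ioo (-Real.pi) Real.pi ⊆ polarCoord.target :=
    prod_mono Ioo_subset_Ioi_self subset_rfl
  rw [← lintegral_indicator measurableSet_ball, ← Complex.lintegral_comp_polarCoord_symm,
    setLIntegral_congr_fun polarCoord.open_target.measurableSet hpolar,
    lintegral_indicator_one (measurableSet_Ioo.prod measurableSet_Ioo),
    Measure.restrict_apply (measurableSet_Ioo.prod measurableSet_Ioo), inter_eq_left.mpr hsub,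
    Measure.volume_eq_prod, Measure.prod_prod, Real.volume_Ioo, Real.volume_Ioo,
    ← ENNReal.ofReal_mul' (by linarith [Real.pi_pos])]
  congr 1
  ring

theorem Complex.setLIntegral_reProdIm_comp_im (s t : Set ℝ) {f : ℝ → ℝ≥0∞}
    (hf : AEMeasurable f (volume.restrict t)) :
    ∫⁻ w in s ×ℂ t, f w.im = volume s * ∫⁻ y in t, f y := by
  rw [← setLIntegral_one, ← lintegral_prod_mul aemeasurable_const hf, Measure.prod_restrict,
    ← Measure.volume_eq_prod]
  simp only [one_mul]
  exact Complex.volume_preserving_equiv_real_prod.setLIntegral_comp_preimage_emb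
    Complex.measurableEquivRealProd.measurableEmbedding (fun p => f p.2) (s ×ˢ t)

theorem Complex.volume_reProdIm (s t : Set ℝ) : volume (s ×ℂ t) = volume s * volume t := by
  simpa using Complex.setLIntegral_reProdIm_comp_im s t (f := fun _ => 1) aemeasurable_const

/-- `min (1, 1 / |y|)` cut off at `|y| = L`. -/
noncomputable def cutoffInv (L y : ℝ) : ℝ≥0∞ :=
  (ball (0 : ℝ) 1).indicator 1 y + {y : ℝ | |y| ∈ Icc 1 L}.indicator (‖·‖ₑ⁻¹) y

theorem measurable_cutoffInv (L : ℝ) : Measurable (cutoffInv L) :=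
  (measurable_one.indicator measurableSet_ball).add
    (measurable_enorm.inv.indicator (measurableSet_abs_mem_Icc 1 L))

theorem lintegral_cutoffInv {L : ℝ} (hL : 1 ≤ L) :
    ∫⁻ y, cutoffInv L y = ENNReal.ofReal (2 + 2 * Real.log L) := by
  simp only [cutoffInv]
  rw [lintegral_add_left (measurable_one.indicator measurableSet_ball :
      Measurable ((ball (0 : ℝ) 1).indicator (1 : ℝ → ℝ≥0∞))),
    lintegral_indicator_one measurableSet_ball,
    lintegral_indicator (measurableSet_abs_mem_Icc 1 L),
    setLIntegral_abs_mem_Icc_enorm_inv one_pos hL, Real.volume_ball, div_one, mul_one,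
    ← ENNReal.ofReal_add zero_le_two (mul_nonneg zero_le_two (Real.log_nonneg hL))]

theorem Complex.enorm_inv_le_indicator_ball_add_cutoffInv {z : ℂ} {L : ℝ} (hz : |z.im| ≤ L) :
    ‖z‖ₑ⁻¹ ≤ (ball 0 1).indicator (‖·‖ₑ⁻¹) z + cutoffInv L z.im := by
  rw [cutoffInv]
  by_cases hball : z ∈ ball 0 1
  · rw [indicator_of_mem hball]
    exact le_self_add
  by_cases hstrip : z.im ∈ ball (0 : ℝ) 1
  · have hz1 : 1 ≤ ‖z‖ₑ := by
      rw [mem_ball_zero_iff, not_lt] at hball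
      simpa [← ofReal_norm] using hball
    rw [indicator_of_mem hstrip, Pi.one_apply]
    exact (ENNReal.inv_le_one.mpr hz1).trans (le_self_add.trans le_add_self)
  · have him : |z.im| ∈ Icc 1 L := ⟨by simpa using hstrip, hz⟩
    rw [indicator_of_mem (show z.im ∈ {y : ℝ | |y| ∈ Icc 1 L} from him)]
    refine le_trans ?_ (le_add_self.trans le_add_self)
    rw [ENNReal.inv_le_inv, ← ofReal_norm, ← ofReal_norm]
    exact ENNReal.ofReal_le_ofReal (Complex.abs_im_le_norm z)

noncomputable def invDistIntegral (S : Set ℂ) (s : ℂ) : ℝ≥0∞ := ∫⁻ w in S, ‖s - w‖ₑ⁻¹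

theorem enorm_setIntegral_div_sub_le {S : Set ℂ} {g : ℂ → ℂ} {ε : ℝ} (hg : ∀ w, ‖g w‖ ≤ ε)
    (s : ℂ) : ‖∫ w in S, g w / (s - w)‖ₑ ≤ ENNReal.ofReal ε * invDistIntegral S s :=
  calc ‖∫ w in S, g w / (s - w)‖ₑ ≤ ∫⁻ w in S, ‖g w / (s - w)‖ₑ :=
        enorm_integral_le_lintegral_enorm _
    _ ≤ ∫⁻ w in S, ENNReal.ofReal ε * ‖s - w‖ₑ⁻¹ := lintegral_mono fun w =>
        (enorm_div_le_mul_enorm_inv _ _).trans <| by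
          gcongr
          rw [← ofReal_norm]
          exact ENNReal.ofReal_le_ofReal (hg w)
    _ = ENNReal.ofReal ε * invDistIntegral S s := lintegral_const_mul' _ _ ENNReal.ofReal_ne_top

theorem setLIntegral_indicator_ball_enorm_inv_sub_le (S : Set ℂ) (s : ℂ) (ρ : ℝ) :
    ∫⁻ w in S, (ball 0 ρ).indicator (‖·‖ₑ⁻¹) (s - w) ≤ ENNReal.ofReal (2 * Real.pi * ρ) :=
  calc _ ≤ ∫⁻ w, (ball 0 ρ).indicator (‖·‖ₑ⁻¹) (s - w) := setLIntegral_le_lintegral _ _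
    _ = ENNReal.ofReal (2 * Real.pi * ρ) := by
        rw [lintegral_sub_left_eq_self, lintegral_indicator measurableSet_ball,
          Complex.setLIntegral_ball_zero_enorm_inv]

theorem omegaRect_eq_reProdIm (R : ℝ) : OmegaRect R = Icc (1 / 2) (5 / 2) ×ℂ Icc (-R) R := by
  ext w
  simp [OmegaRect, Complex.mem_reProdIm, abs_le, and_assoc]

theorem measurableSet_omegaRect (R : ℝ) : MeasurableSet (OmegaRect R) :=
  omegaRect_eq_reProdIm R ▸ (isClosed_Icc.reProdIm isClosed_Icc).measurableSet

theorem setLIntegral_omegaRect_comp_sub_im_le (R t : ℝ) {G : ℝ → ℝ≥0∞} (hG : Measurable G) :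
    ∫⁻ w in OmegaRect R, G (t - w.im) ≤ 2 * ∫⁻ y, G y := by
  have hsub : OmegaRect R ⊆ Icc (1 / 2) (5 / 2) ×ℂ univ := by
    rw [omegaRect_eq_reProdIm]
    exact fun w hw => ⟨hw.1, mem_univ _⟩
  calc ∫⁻ w in OmegaRect R, G (t - w.im) ≤ ∫⁻ w in Icc (1 / 2) (5 / 2) ×ℂ univ, G (t - w.im) :=
        lintegral_mono_set hsub
    _ = 2 * ∫⁻ y, G y := by
        rw [Complex.setLIntegral_reProdIm_comp_im (f := fun y => G (t - y)) _ _
            (hG.comp (measurable_const.sub measurable_id)).aemeasurable,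
          Real.volume_Icc, Measure.restrict_univ, lintegral_sub_left_eq_self]
        norm_num

theorem invDistIntegral_omegaRect_le_of_abs_im_le {R : ℝ} (hR : 1 ≤ 3 * R) {s : ℂ}
    (hs : |s.im| ≤ 2 * R) :
    invDistIntegral (OmegaRect R) s ≤
      ENNReal.ofReal (2 * Real.pi + 4 * (1 + Real.log (3 * R))) := by
  have hpt : ∀ w ∈ OmegaRect R,
      ‖s - w‖ₑ⁻¹ ≤ (ball 0 1).indicator (‖·‖ₑ⁻¹) (s - w) + cutoffInv (3 * R) (s.im - w.im) := by
    intro w hw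
    refine (Complex.enorm_inv_le_indicator_ball_add_cutoffInv (L := 3 * R) ?_).trans_eq
      (by simp)
    calc |(s - w).im| ≤ |s.im| + |w.im| := by simpa using abs_sub s.im w.im
      _ ≤ 3 * R := by linarith [hw.2.2]
  have hlog : 0 ≤ Real.log (3 * R) := Real.log_nonneg hR
  calc invDistIntegral (OmegaRect R) s
      ≤ ∫⁻ w in OmegaRect R,
          (ball 0 1).indicator (‖·‖ₑ⁻¹) (s - w) + cutoffInv (3 * R) (s.im - w.im) :=
        setLIntegral_mono' (measurableSet_omegaRect R) hpt
    _ = (∫⁻ w in OmegaRect R, (ball 0 1).indicator (‖·‖ₑ⁻¹) (s - w)) +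
          ∫⁻ w in OmegaRect R, cutoffInv (3 * R) (s.im - w.im) :=
        lintegral_add_right _ ((measurable_cutoffInv _).comp
          (measurable_const.sub Complex.measurable_im))
    _ ≤ ENNReal.ofReal (2 * Real.pi * 1) + 2 * ENNReal.ofReal (2 + 2 * Real.log (3 * R)) := by
        gcongr
        · exact setLIntegral_indicator_ball_enorm_inv_sub_le _ s 1
        · exact lintegral_cutoffInv hR ▸
            setLIntegral_omegaRect_comp_sub_im_le R s.im (measurable_cutoffInv _)
    _ = _ := by
        rw [← ENNReal.ofReal_ofNat 2, ← ENNReal.ofReal_mul zero_le_two,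
          ← ENNReal.ofReal_add (by positivity) (by positivity)]
        ring_nf

theorem invDistIntegral_omegaRect_le_of_lt_abs_im {R : ℝ} {s : ℂ} (hs : 2 * R < |s.im|) :
    invDistIntegral (OmegaRect R) s ≤ ENNReal.ofReal (8 * R / |s.im|) := by
  have hpt : ∀ w ∈ OmegaRect R, ‖s - w‖ₑ⁻¹ ≤ ENNReal.ofReal (2 / |s.im|) := by
    intro w hw
    have hpos : 0 < |s.im| / 2 := by linarith [hw.2.2, abs_nonneg w.im]
    have hfar : |s.im| / 2 ≤ ‖s - w‖ :=
      calc |s.im| / 2 ≤ |s.im| - |w.im| := by linarith [hw.2.2]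
        _ ≤ |(s - w).im| := by simpa using abs_sub_abs_le_abs_sub s.im w.im
        _ ≤ ‖s - w‖ := Complex.abs_im_le_norm _
    rw [← ofReal_norm, ← ENNReal.ofReal_inv_of_pos (hpos.trans_le hfar)]
    exact ENNReal.ofReal_le_ofReal ((inv_anti₀ hpos hfar).trans_eq (by rw [inv_div]))
  calc invDistIntegral (OmegaRect R) s ≤ ∫⁻ _ in OmegaRect R, ENNReal.ofReal (2 / |s.im|) :=
        setLIntegral_mono measurable_const hpt
    _ = ENNReal.ofReal (8 * R / |s.im|) := by
        rw [setLIntegral_const, omegaRect_eq_reProdIm, Complex.volume_reProdIm, Real.volume_Icc,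
          Real.volume_Icc, ← ENNReal.ofReal_mul (by norm_num),
          ← ENNReal.ofReal_mul (div_nonneg zero_le_two (abs_nonneg _))]
        congr 1
        field_simp
        ring

theorem Real.lt_log_of_two_le {R : ℝ} (hR : 2 ≤ R) : 0.69 < Real.log R :=
  Real.log_two_gt_d9.trans_le (Real.log_le_log (by norm_num) hR) |>.trans_le' (by norm_num)

noncomputable def omegaMajorant (R r : ℝ) : ℝ :=
  if r ≤ 2 * R then 40 * Real.log R else 8 * R / r

theorem invDistIntegral_omegaRect_le_omegaMajorant {R : ℝ} (hR : 2 ≤ R) (s : ℂ) :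
    invDistIntegral (OmegaRect R) s ≤ ENNReal.ofReal (omegaMajorant R |s.im|) := by
  unfold omegaMajorant
  split_ifs with hs
  · refine (invDistIntegral_omegaRect_le_of_abs_im_le (by linarith) hs).trans
      (ENNReal.ofReal_le_ofReal ?_)
    have hlog3 : Real.log 3 ≤ 2 := by linarith [Real.log_le_sub_one_of_pos (x := 3) (by norm_num)]
    have hlogR := Real.lt_log_of_two_le hR
    rw [Real.log_mul (by norm_num) (by linarith)]
    linarith [Real.pi_lt_four]
  · exact invDistIntegral_omegaRect_le_of_lt_abs_im (not_le.mp hs)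

theorem setLIntegral_Ioc_omegaMajorant_sq {R : ℝ} (hR : 1 ≤ R) :
    ∫⁻ r in Ioc 0 (2 * R), ENNReal.ofReal (omegaMajorant R r) ^ 2 =
      ENNReal.ofReal (2 * R * (40 * Real.log R) ^ 2) := by
  rw [setLIntegral_congr_fun measurableSet_Ioc fun r hr => by rw [omegaMajorant, if_pos hr.2],
    setLIntegral_const, Real.volume_Ioc,
    ← ENNReal.ofReal_pow (mul_nonneg (by norm_num) (Real.log_nonneg hR)),
    ← ENNReal.ofReal_mul' (by linarith), sub_zero, mul_comm]

theorem setLIntegral_Ioi_omegaMajorant_sq {R : ℝ} (hR : 0 < R) :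
    ∫⁻ r in Ioi (2 * R), ENNReal.ofReal (omegaMajorant R r) ^ 2 = ENNReal.ofReal (32 * R) := by
  have hsq : ∀ r ∈ Ioi (2 * R), ENNReal.ofReal (omegaMajorant R r) ^ 2 =
      ENNReal.ofReal (64 * R ^ 2) * ENNReal.ofReal (r ^ 2)⁻¹ := by
    intro r (hr : 2 * R < r)
    have hr0 : 0 < r := by linarith
    rw [omegaMajorant, if_neg (not_le.mpr hr), ← ENNReal.ofReal_pow (by positivity),
      ← ENNReal.ofReal_mul (by positivity)]
    congr 1
    field_simp
    ring
  rw [setLIntegral_congr_fun measurableSet_Ioi hsq,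
    lintegral_const_mul' _ _ ENNReal.ofReal_ne_top, setLIntegral_Ioi_ofReal_inv_sq (by positivity),
    ← ENNReal.ofReal_mul (by positivity)]
  congr 1
  field_simp
  ring

theorem lintegral_omegaMajorant_sq_le {R : ℝ} (hR : 2 ≤ R) :
    ∫⁻ t, ENNReal.ofReal (omegaMajorant R |t|) ^ 2 ≤
      ENNReal.ofReal ((84 * √R * Real.log R) ^ 2) := by
  have hlogR := Real.lt_log_of_two_le hR
  rw [lintegral_comp_abs (fun r => ENNReal.ofReal (omegaMajorant R r) ^ 2),
    ← Ioc_union_Ioi_eq_Ioi (show (0 : ℝ) ≤ 2 * R by linarith),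
    lintegral_union measurableSet_Ioi Ioc_disjoint_Ioi_same,
    setLIntegral_Ioc_omegaMajorant_sq (by linarith),
    setLIntegral_Ioi_omegaMajorant_sq (by linarith),
    ← ENNReal.ofReal_add (by positivity) (by linarith), ← ENNReal.ofReal_ofNat 2,
    ← ENNReal.ofReal_mul zero_le_two]
  refine ENNReal.ofReal_le_ofReal ?_
  have hlog_sq : (0.2 : ℝ) ≤ Real.log R ^ 2 := by nlinarith
  rw [mul_pow, mul_pow, mul_pow, Real.sq_sqrt (by linarith)]
  nlinarith [mul_le_mul_of_nonneg_left hlog_sq (by linarith : (0 : ℝ) ≤ R)]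

theorem enorm_cauchyTransform_omegaRect_le {R ε : ℝ} (hR : 2 ≤ R) {g : ℂ → ℂ}
    (hg : ∀ w, ‖g w‖ ≤ ε) (s : ℂ) :
    ‖(1 / (Real.pi : ℂ)) * ∫ w in OmegaRect R, g w / (s - w)‖ₑ ≤
      ENNReal.ofReal ε * ENNReal.ofReal (omegaMajorant R |s.im|) := by
  have hpi : ‖(1 / (Real.pi : ℂ))‖ₑ ≤ 1 := by
    rw [← ofReal_norm, ENNReal.ofReal_le_one, norm_div, norm_one, Complex.norm_real,
      Real.norm_of_nonneg Real.pi_pos.le]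
    exact div_le_one_of_le₀ (by linarith [Real.pi_gt_three]) Real.pi_pos.le
  calc _ ≤ ‖∫ w in OmegaRect R, g w / (s - w)‖ₑ := by
        rw [enorm_mul]
        exact mul_le_of_le_one_left' hpi
    _ ≤ ENNReal.ofReal ε * invDistIntegral (OmegaRect R) s := enorm_setIntegral_div_sub_le hg s
    _ ≤ _ := by
        gcongr
        exact invDistIntegral_omegaRect_le_omegaMajorant hR s

/-- `L²` bounds on vertical lines for the Cauchy transform of a bounded continuous
function supported on the rectangle `Ω(R, 2)`. -/
theorem cauchy_transform_L2_bound :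
    ∃ c' > (0 : ℝ),
      ∀ R : ℝ, 2 ≤ R → ∀ ε : ℝ, 0 < ε → ∀ g : ℂ → ℂ, Continuous g →
        (∀ w : ℂ, w ∉ OmegaRect R → g w = 0) → (∀ w : ℂ, ‖g w‖ ≤ ε) →
        ∀ σ : ℝ, 1 / 2 ≤ σ →
          (∫⁻ t : ℝ,
              (‖(1 / (Real.pi : ℂ)) *
                  ∫ w in OmegaRect R, g w / (((σ : ℂ) + (t : ℂ) * Complex.I) - w)‖₊ :
                ENNReal) ^ 2) ^ (1 / 2 : ℝ) ≤
            ENNReal.ofReal (c' * ε * Real.sqrt R * Real.log R) := by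
  refine ⟨84, by norm_num, fun R hR ε hε g _ _ hg σ _ => ?_⟩
  simp only [← enorm_eq_nnnorm]
  have hlog : 0 ≤ Real.log R := Real.log_nonneg (by linarith)
  refine ENNReal.rpow_one_half_le_ofReal (by positivity) ?_
  calc _ ≤ ∫⁻ t : ℝ, ENNReal.ofReal (ε ^ 2) * ENNReal.ofReal (omegaMajorant R |t|) ^ 2 := by
        refine lintegral_mono fun t => ?_
        rw [ENNReal.ofReal_pow hε.le, ← mul_pow]
        gcongr
        simpa using enorm_cauchyTransform_omegaRect_le hR hg (σ + t * Complex.I)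
    _ ≤ ENNReal.ofReal (ε ^ 2) * ENNReal.ofReal ((84 * √R * Real.log R) ^ 2) := by
        rw [lintegral_const_mul' _ _ ENNReal.ofReal_ne_top]
        gcongr
        exact lintegral_omegaMajorant_sq_le hR
    _ = _ := by
        rw [← ENNReal.ofReal_mul (by positivity)]
        ring_nf
end

section
/- Let k be a nonnegative integer and let a : ℕ → ℂ be finitely supported with a_0 = 0 (so that P(t) = ∑_{n≥1} a_n n^{−it} is a Dirichlet polynomial). Then limsup_{T→∞} (1/T) ∫_0^T | ∑_{n≥1} a_n n^{−it} |^{2^{k+1}} dt ≤ ( ∑_{n≥1} |a_n|² d(n)^k )^{2^k}. (Equivalently, the ℋ^{2^{k+1}}-norm of the Dirichlet polynomial is at most its 𝒟_k-norm: the space 𝒟_k is contractively embedded in ℋ^{2^{k+1}}.) -/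
/-!
Write `A` for the arithmetic function `n ↦ aₙ`. As `L(A, ·)` is a finite Dirichlet series,
`L(A, it)^(2^k) = L(A^(2^k), it)`, so the integrand is the square of a Dirichlet polynomial,
whose mean square tends to `∑ |A^(2^k)(n)|²` because the characters `t ↦ n^{-it}` are orthogonal
on average. On the coefficient side, Cauchy–Schwarz over the `d(n)` factorisations `n = xy`
and `d(xy) ≤ d(x) d(y)` give `‖c * c‖²_{𝒟_j} ≤ ‖c‖⁴_{𝒟_{j+1}}`; applying this `k` times bounds
the `𝒟_0`-norm of `A^(2^k)` by the `𝒟_k`-norm of `A`.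
-/

open MeasureTheory Filter Finset Complex
open scoped Pointwise Topology ComplexConjugate

theorem tendsto_average_integral_exp_mul_I (ω : ℝ) :
    Tendsto (fun T : ℝ => (T : ℂ)⁻¹ * ∫ t in (0 : ℝ)..T, exp (ω * t * I)) atTop
      (𝓝 (if ω = 0 then 1 else 0)) := by
  split_ifs with hω
  · subst hω
    refine tendsto_const_nhds.congr' ?_
    filter_upwards [eventually_ne_atTop 0] with T hT
    simp [hT]
  · have hc : (ω : ℂ) * I ≠ 0 := mul_ne_zero (ofReal_ne_zero.2 hω) I_ne_zero
    have hbound : ∀ T : ℝ, ‖∫ t in (0 : ℝ)..T, exp (ω * t * I)‖ ≤ 2 / |ω| := by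
      intro T
      simp_rw [mul_right_comm _ _ I]
      rw [integral_exp_mul_complex hc, norm_div, norm_mul, norm_I, mul_one, norm_real,
        Real.norm_eq_abs]
      gcongr
      refine (norm_sub_le _ _).trans_eq ?_
      rw [mul_right_comm, ← ofReal_mul, norm_exp_ofReal_mul_I]
      norm_num
    refine squeeze_zero_norm' ?_ (by simpa using tendsto_inv_atTop_zero.mul_const (2 / |ω|))
    filter_upwards [eventually_gt_atTop 0] with T hT
    rw [norm_mul, norm_inv, norm_real, Real.norm_of_nonneg hT.le]
    exact mul_le_mul_of_nonneg_left (hbound T) (by positivity)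

theorem tendsto_average_integral_norm_sq_sum_exp {ι : Type*} (s : Finset ι) (c : ι → ℂ)
    {ω : ι → ℝ} (hω : Set.InjOn ω s) :
    Tendsto (fun T : ℝ => 1 / T * ∫ t in (0 : ℝ)..T, ‖∑ i ∈ s, c i * exp (ω i * t * I)‖ ^ 2)
      atTop (𝓝 (∑ i ∈ s, ‖c i‖ ^ 2)) := by
  have hexpand : ∀ t : ℝ, ((‖∑ i ∈ s, c i * exp (ω i * t * I)‖ ^ 2 : ℝ) : ℂ) =
      ∑ i ∈ s, ∑ j ∈ s, c i * conj (c j) * exp ((ω i - ω j : ℝ) * t * I) := by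
    intro t
    rw [ofReal_pow, ← mul_conj', map_sum, sum_mul_sum]
    refine sum_congr rfl fun i _ => sum_congr rfl fun j _ => ?_
    rw [map_mul, ← exp_conj]
    simp only [map_mul, conj_ofReal, conj_I, ofReal_sub]
    rw [mul_mul_mul_comm, ← exp_add]
    ring_nf
  have haverage : ∀ T : ℝ,
      ((1 / T * ∫ t in (0 : ℝ)..T, ‖∑ i ∈ s, c i * exp (ω i * t * I)‖ ^ 2 : ℝ) : ℂ) =
        ∑ i ∈ s, ∑ j ∈ s, c i * conj (c j) *
          ((T : ℂ)⁻¹ * ∫ t in (0 : ℝ)..T, exp ((ω i - ω j : ℝ) * t * I)) := by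
    intro T
    rw [ofReal_mul, ← intervalIntegral.integral_ofReal,
      intervalIntegral.integral_congr fun t _ => hexpand t,
      intervalIntegral.integral_finsetSum fun i _ => by
        apply Continuous.intervalIntegrable; fun_prop,
      mul_sum]
    refine sum_congr rfl fun i _ => ?_
    rw [intervalIntegral.integral_finsetSum fun j _ => by
      apply Continuous.intervalIntegrable; fun_prop, mul_sum]
    refine sum_congr rfl fun j _ => ?_
    rw [intervalIntegral.integral_const_mul]
    push_cast
    ring
  have hdiag : ∑ i ∈ s, ∑ j ∈ s, c i * conj (c j) * (if ω i - ω j = 0 then 1 else 0)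
      = ((∑ i ∈ s, ‖c i‖ ^ 2 : ℝ) : ℂ) := by
    push_cast
    refine sum_congr rfl fun i hi => ?_
    rw [sum_eq_single_of_mem i hi fun j hj hji => by
      rw [if_neg (sub_ne_zero.2 fun h => hji (hω hj hi h.symm)), mul_zero]]
    simp [mul_conj']
  rw [← tendsto_ofReal_iff, ← hdiag]
  simp_rw [haverage]
  exact tendsto_finsetSum _ fun i _ => tendsto_finsetSum _ fun j _ =>
    (tendsto_average_integral_exp_mul_I _).const_mul _

theorem LSeries_eq_sum_exp {f : ℕ → ℂ} {s : Finset ℕ} (hf : Function.support f ⊆ s)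
    (h0 : 0 ∉ s) (t : ℝ) :
    LSeries f (t * I) = ∑ n ∈ s, f n * exp ((-Real.log n : ℝ) * t * I) := by
  rw [LSeries, tsum_eq_sum fun n hn => by
    simp [LSeries.term, Function.notMem_support.1 (hn <| hf ·)]]
  refine sum_congr rfl fun n hn => ?_
  have hn0 : n ≠ 0 := ne_of_mem_of_not_mem hn h0
  rw [LSeries.term_of_ne_zero hn0, div_eq_mul_inv, ← cpow_neg,
    cpow_def_of_ne_zero (Nat.cast_ne_zero.2 hn0), ← natCast_log]
  push_cast
  ring_nf

theorem tendsto_average_integral_norm_sq_LSeries {f : ℕ → ℂ} (hf : (Function.support f).Finite)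
    (hf0 : f 0 = 0) :
    Tendsto (fun T : ℝ => 1 / T * ∫ t in (0 : ℝ)..T, ‖LSeries f (t * I)‖ ^ 2) atTop
      (𝓝 (∑' n, ‖f n‖ ^ 2)) := by
  have hs : Function.support f ⊆ hf.toFinset := by simp
  have h0 : 0 ∉ hf.toFinset := by simp [hf0]
  have hlog : Set.InjOn (fun n : ℕ => -Real.log n) hf.toFinset := by
    intro m hm n hn hmn
    have hm0 : (0 : ℝ) < m := Nat.cast_pos.2 (Nat.pos_of_ne_zero (ne_of_mem_of_not_mem hm h0))
    have hn0 : (0 : ℝ) < n := Nat.cast_pos.2 (Nat.pos_of_ne_zero (ne_of_mem_of_not_mem hn h0))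
    exact_mod_cast Real.log_injOn_pos hm0 hn0 (neg_inj.1 hmn)
  rw [tsum_eq_sum fun n hn => by simp [Function.notMem_support.1 (hn <| hs ·)]]
  simp_rw [LSeries_eq_sum_exp hs h0]
  exact tendsto_average_integral_norm_sq_sum_exp _ f hlog

theorem Nat.card_divisors_mul_le (m n : ℕ) : #(m * n).divisors ≤ #m.divisors * #n.divisors := by
  rw [Nat.divisors_mul]
  exact card_mul_le

theorem Nat.card_divisorsAntidiagonal (n : ℕ) : #n.divisorsAntidiagonal = #n.divisors := by
  rw [← Nat.map_div_right_divisors, card_map]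

namespace ArithmeticFunction

variable {R : Type*}

theorem support_mul_subset [Semiring R] (f g : ArithmeticFunction R) :
    Function.support (f * g) ⊆ Function.support f * Function.support g := by
  intro n hn
  rw [Function.mem_support, mul_apply] at hn
  obtain ⟨p, hp, hne⟩ := exists_ne_zero_of_sum_ne_zero hn
  exact ⟨p.1, left_ne_zero_of_mul hne, p.2, right_ne_zero_of_mul hne,
    (Nat.mem_divisorsAntidiagonal.1 hp).1⟩

theorem finite_support_pow [Semiring R] {f : ArithmeticFunction R}
    (hf : (Function.support f).Finite) (m : ℕ) : (Function.support ⇑(f ^ m)).Finite := by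
  induction m with
  | zero =>
    exact (Set.finite_singleton 1).subset fun n hn =>
      by_contra fun h => hn (by rw [pow_zero]; exact one_apply_ne h)
  | succ m ih => rw [pow_succ]; exact (ih.mul hf).subset (support_mul_subset _ _)

theorem sum_mul_apply [CommSemiring R] {f g : ArithmeticFunction R} {s t : Finset ℕ}
    (hf : Function.support f ⊆ s) (hg : Function.support g ⊆ t) :
    ∑ n ∈ s * t, (f * g) n = (∑ m ∈ s, f m) * ∑ n ∈ t, g n := by
  classical
  rw [sum_mul_sum, ← sum_product', Finset.mul_def]
  refine sum_image' _ fun p _ => ?_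
  have hvanish : ∀ x : ℕ × ℕ, x ∉ s ×ˢ t → f x.1 * g x.2 = 0 := fun x hx => by
    rw [mem_product, not_and_or] at hx
    rcases hx with hx | hx
    · rw [Function.notMem_support.1 (hx <| hf ·), zero_mul]
    · rw [Function.notMem_support.1 (hx <| hg ·), mul_zero]
  rcases eq_or_ne (p.1 * p.2) 0 with h | h
  · rw [h, map_zero]
    refine (sum_eq_zero fun x hx => ?_).symm
    rcases mul_eq_zero.1 ((mem_filter.1 hx).2) with h0 | h0 <;> simp [h0]
  · rw [mul_apply]
    refine (sum_subset (fun x hx => ?_) fun x hx hx' => hvanish x fun hst => hx' ?_).symm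
    · exact Nat.mem_divisorsAntidiagonal.2 ⟨(mem_filter.1 hx).2, h⟩
    · exact mem_filter.2 ⟨hst, (Nat.mem_divisorsAntidiagonal.1 hx).1⟩

/-- `∑' n, divisorWeightedNormSq j f n` is the squared `𝒟_j`-norm of `f`. -/
noncomputable def divisorWeightedNormSq [NormedRing R] (j : ℕ) (f : ArithmeticFunction R) :
    ArithmeticFunction ℝ :=
  ⟨fun n => ‖f n‖ ^ 2 * (#n.divisors : ℝ) ^ j, by simp⟩

@[simp]
theorem divisorWeightedNormSq_apply [NormedRing R] (j : ℕ) (f : ArithmeticFunction R) (n : ℕ) :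
    divisorWeightedNormSq j f n = ‖f n‖ ^ 2 * (#n.divisors : ℝ) ^ j :=
  rfl

theorem norm_mul_apply_sq_le [NormedRing R] (f g : ArithmeticFunction R) (n : ℕ) :
    ‖(f * g) n‖ ^ 2 ≤ #n.divisors * ∑ p ∈ n.divisorsAntidiagonal, ‖f p.1‖ ^ 2 * ‖g p.2‖ ^ 2 := by
  rw [← Nat.card_divisorsAntidiagonal, mul_apply]
  calc ‖∑ p ∈ n.divisorsAntidiagonal, f p.1 * g p.2‖ ^ 2
      ≤ (∑ p ∈ n.divisorsAntidiagonal, ‖f p.1‖ * ‖g p.2‖) ^ 2 := by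
        gcongr
        exact (norm_sum_le _ _).trans (sum_le_sum fun p _ => norm_mul_le _ _)
    _ ≤ #n.divisorsAntidiagonal * ∑ p ∈ n.divisorsAntidiagonal, (‖f p.1‖ * ‖g p.2‖) ^ 2 :=
        sq_sum_le_card_mul_sum_sq
    _ = _ := by simp_rw [mul_pow]

theorem norm_mul_apply_sq_mul_le [NormedRing R] (f g : ArithmeticFunction R) (j n : ℕ) :
    ‖(f * g) n‖ ^ 2 * (#n.divisors : ℝ) ^ j ≤
      (divisorWeightedNormSq (j + 1) f * divisorWeightedNormSq (j + 1) g) n := by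
  calc ‖(f * g) n‖ ^ 2 * (#n.divisors : ℝ) ^ j
      ≤ (#n.divisors : ℝ) ^ (j + 1) *
          ∑ p ∈ n.divisorsAntidiagonal, ‖f p.1‖ ^ 2 * ‖g p.2‖ ^ 2 :=
        (mul_le_mul_of_nonneg_right (norm_mul_apply_sq_le f g n) (by positivity)).trans_eq
          (by ring)
    _ = ∑ p ∈ n.divisorsAntidiagonal,
          (#(p.1 * p.2).divisors : ℝ) ^ (j + 1) * (‖f p.1‖ ^ 2 * ‖g p.2‖ ^ 2) := by
        rw [mul_sum]
        refine sum_congr rfl fun p hp => ?_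
        rw [(Nat.mem_divisorsAntidiagonal.1 hp).1]
    _ ≤ _ := by
        rw [mul_apply]
        refine sum_le_sum fun p _ => ?_
        have hd : (#(p.1 * p.2).divisors : ℝ) ≤ #p.1.divisors * #p.2.divisors := by
          exact_mod_cast Nat.card_divisors_mul_le p.1 p.2
        calc (#(p.1 * p.2).divisors : ℝ) ^ (j + 1) * (‖f p.1‖ ^ 2 * ‖g p.2‖ ^ 2)
            ≤ ((#p.1.divisors : ℝ) * #p.2.divisors) ^ (j + 1) * (‖f p.1‖ ^ 2 * ‖g p.2‖ ^ 2) := by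
              gcongr
          _ = _ := by simp only [divisorWeightedNormSq_apply]; ring

theorem tsum_divisorWeightedNormSq_mul_self_le [NormedCommRing R] {f : ArithmeticFunction R}
    (hf : (Function.support f).Finite) (j : ℕ) :
    ∑' n, divisorWeightedNormSq j (f * f) n ≤ (∑' n, divisorWeightedNormSq (j + 1) f n) ^ 2 := by
  set s := hf.toFinset
  have hs : Function.support f ⊆ s := by simp [s]
  have hweight : ∀ i, Function.support (divisorWeightedNormSq i f) ⊆ s := fun i n hn =>
    hs fun h => hn (by simp [h])
  have hss : ∀ i, Function.support (divisorWeightedNormSq i (f * f)) ⊆ ↑(s * s) := fun i n hn => by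
    rw [Finset.coe_mul]
    exact Set.mul_subset_mul hs hs <| support_mul_subset f f fun h => hn (by simp [h])
  rw [tsum_eq_sum fun n hn => Function.notMem_support.1 (hn <| hss j ·),
    tsum_eq_sum fun n hn => Function.notMem_support.1 (hn <| hweight (j + 1) ·), sq,
    ← sum_mul_apply (hweight _) (hweight _)]
  exact sum_le_sum fun n _ => norm_mul_apply_sq_mul_le f f j n

theorem tsum_divisorWeightedNormSq_pow_le [NormedCommRing R] (k : ℕ) {f : ArithmeticFunction R}
    (hf : (Function.support f).Finite) (j : ℕ) :
    ∑' n, divisorWeightedNormSq j (f ^ 2 ^ k) n ≤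
      (∑' n, divisorWeightedNormSq (j + k) f n) ^ 2 ^ k := by
  induction k generalizing f with
  | zero => simp
  | succ k ih =>
    have hff : (Function.support (f * f)).Finite := (hf.mul hf).subset (support_mul_subset f f)
    calc ∑' n, divisorWeightedNormSq j (f ^ 2 ^ (k + 1)) n
        = ∑' n, divisorWeightedNormSq j ((f * f) ^ 2 ^ k) n := by rw [pow_succ', pow_mul, sq]
      _ ≤ (∑' n, divisorWeightedNormSq (j + k) (f * f) n) ^ 2 ^ k := ih hff
      _ ≤ ((∑' n, divisorWeightedNormSq (j + k + 1) f n) ^ 2) ^ 2 ^ k := by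
        gcongr
        · exact tsum_nonneg fun n => by simp only [divisorWeightedNormSq_apply]; positivity
        · exact tsum_divisorWeightedNormSq_mul_self_le hf _
      _ = (∑' n, divisorWeightedNormSq (j + (k + 1)) f n) ^ 2 ^ (k + 1) := by
        rw [← pow_mul, ← pow_succ', add_assoc]

theorem LSeries_pow {f : ArithmeticFunction ℂ} (hf : (Function.support f).Finite) (s : ℂ)
    (m : ℕ) : LSeries ⇑(f ^ m) s = LSeries f s ^ m := by
  have hsum : ∀ {g : ℕ → ℂ}, (Function.support g).Finite → LSeriesSummable g s := fun hg =>
    summable_of_hasFiniteSupport <| hg.subset fun n hn => by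
      by_contra h; exact hn (by simp [LSeries.term, Function.notMem_support.1 h])
  induction m with
  | zero => simp [one_eq_delta, LSeries_delta]
  | succ m ih =>
    rw [pow_succ, LSeries_mul' (hsum (finite_support_pow hf m)) (hsum hf), ih, pow_succ]

end ArithmeticFunction

/-- **Lemma 7.** For a nonnegative integer `k`, the space `𝒟_k` is contractively
embedded in `ℋ^{2^{k+1}}`: for every Dirichlet polynomial,
`limsup_{T→∞} (1/T) ∫₀^T |∑ aₙ n^{-it}|^{2^{k+1}} dt ≤ (∑ |aₙ|² d(n)^k)^{2^k}`. -/
theorem Dk_contractive_in_H2pow (k : ℕ) (a : ℕ → ℂ) (ha0 : a 0 = 0)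
    (hfin : (Function.support a).Finite) :
    Filter.limsup (fun T : ℝ =>
        (1 / T) * ∫ t in (0 : ℝ)..T,
          ‖∑' n : ℕ, a n * (n : ℂ) ^ (-(t : ℂ) * Complex.I)‖ ^ (2 ^ (k + 1)))
      Filter.atTop ≤
    (∑' n : ℕ, ‖a n‖ ^ 2 * (n.divisors.card : ℝ) ^ k) ^ (2 ^ k) := by
  let A : ArithmeticFunction ℂ := ⟨a, ha0⟩
  have hA : (Function.support A).Finite := hfin
  have hpow : ∀ t : ℝ, ‖∑' n : ℕ, a n * (n : ℂ) ^ (-(t : ℂ) * I)‖ ^ (2 ^ (k + 1)) =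
      ‖LSeries ⇑(A ^ 2 ^ k) (t * I)‖ ^ 2 := fun t => by
    rw [ArithmeticFunction.LSeries_pow hA, norm_pow, ← pow_mul, ← pow_succ, LSeries]
    simp_rw [LSeries.term_def₀ A.map_zero, neg_mul]
    rfl
  simp_rw [hpow]
  rw [(tendsto_average_integral_norm_sq_LSeries (ArithmeticFunction.finite_support_pow hA _)
    (A ^ 2 ^ k).map_zero).limsup_eq]
  have hcoeff := ArithmeticFunction.tsum_divisorWeightedNormSq_pow_le k hA 0
  simp only [ArithmeticFunction.divisorWeightedNormSq_apply, zero_add, pow_zero, mul_one]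
    at hcoeff
  exact hcoeff
end

section
/- Let a : ℕ → ℂ satisfy ∑_{n≥1} |a_n|² < ∞, and let f(s) = ∑_{n=1}^∞ a_n n^{−s} be the corresponding Dirichlet series, holomorphic on ℂ⁺_{1/2}. If f is not identically zero on ℂ⁺_{1/2} and f(s₀) = 0 for some s₀ ∈ ℂ⁺_{1/2}, then the zero set {s ∈ ℂ⁺_{1/2} : f(s) = 0} is infinite. (A function in ℋ² has either no zeros or infinitely many zeros in ℂ⁺_{1/2}.) -/
/-!
Bohr's almost periodicity: for an absolutely convergent Dirichlet series `f` on `Re s ≥ σ`, the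
phases `n^{-iτ}` of finitely many terms can be brought simultaneously close to `1` for arbitrarily
large `τ` (Dirichlet's approximation argument), and the tail is uniformly small, so
`sup_{Re s ≥ σ} |f(s + iτ) - f(s)|` is as small as we like along an unbounded set of `τ`.
If `f(s₀) = 0` and `f ≢ 0`, choose a small circle around `s₀` on which `|f| ≥ m > 0`. A translate
`f(· + iτ)` within `m/3` of `f` is `≤ m/3` at `s₀` and `≥ 2m/3` on the circle, so by the minimum
modulus principle it vanishes in the disc; this gives zeros with arbitrarily large imaginary part.
-/

open Filter Metric Complex Topology LSeries

theorem exists_ge_forall_norm_exp_mul_I_sub_one_le {ι : Type*} [Fintype ι] (θ : ι → ℝ)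
    {δ : ℝ} (hδ : 0 < δ) (T : ℝ) :
    ∃ τ ≥ T, ∀ i, ‖exp (↑(τ * θ i) * I) - 1‖ ≤ δ := by
  set t := max T 1
  let w : ℕ → ι → ℂ := fun k i => exp (↑(k * t * θ i) * I)
  have hw : ∀ k, w k ∈ closedBall (0 : ι → ℂ) 1 := fun k =>
    mem_closedBall_zero_iff.2 <| (pi_norm_le_iff_of_nonneg zero_le_one).2 fun i =>
      (norm_exp_ofReal_mul_I _).le
  obtain ⟨x, -, φ, hφ, hx⟩ := (isCompact_closedBall (0 : ι → ℂ) 1).tendsto_subseq hw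
  obtain ⟨K, hK⟩ : ∃ K, ∀ n ≥ K, dist (w (φ n)) x < δ / 2 :=
    Metric.tendsto_atTop.1 hx (δ / 2) (half_pos hδ)
  -- `w` is multiplicative in `k`, so two close terms `w j`, `w l` make `w (l - j)` close to `1`.
  set j := φ K
  set l := φ (K + 1)
  have hclose : ‖w l - w j‖ ≤ δ := by
    rw [← dist_eq_norm]
    linarith [dist_triangle_right (w l) (w j) x, hK (K + 1) K.le_succ, hK K le_rfl]
  have hjl : (1 : ℝ) ≤ (l : ℝ) - j := by
    have : j + 1 ≤ l := hφ K.lt_succ_self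
    have : ((j + 1 : ℕ) : ℝ) ≤ l := by exact_mod_cast this
    push_cast at this
    linarith
  refine ⟨((l : ℝ) - j) * t, ?_, fun i => ?_⟩
  · nlinarith [le_max_left T 1, le_max_right T 1]
  · have hrecur : w l i - w j i = (exp (↑(((l : ℝ) - j) * t * θ i) * I) - 1) * w j i := by
      simp only [w]
      rw [sub_one_mul, ← exp_add]
      congr 2
      push_cast
      ring
    calc ‖exp (↑(((l : ℝ) - j) * t * θ i) * I) - 1‖ = ‖w l i - w j i‖ := by
          rw [hrecur, norm_mul, norm_exp_ofReal_mul_I, mul_one]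
      _ ≤ ‖w l - w j‖ := norm_le_pi_norm (w l - w j) i
      _ ≤ δ := hclose

theorem norm_tsum_mul_sub_one_le {ι : Type*} {f c : ι → ℂ} {b : ι → ℝ} (hb : Summable b)
    (hfb : ∀ i, ‖f i‖ ≤ b i) (hc : ∀ i, ‖c i‖ ≤ 1) (S : Finset ι) {δ : ℝ} (hδ : 0 ≤ δ)
    (hS : ∀ i ∈ S, ‖c i - 1‖ ≤ δ) :
    ‖∑' i, f i * (c i - 1)‖ ≤ δ * ∑' i, b i + 2 * ∑' i : ↥(S : Set ι)ᶜ, b i := by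
  have hbound : ∀ i, ‖f i * (c i - 1)‖ ≤ δ * b i + 2 * (S : Set ι)ᶜ.indicator b i := by
    intro i
    have hb0 : 0 ≤ b i := (norm_nonneg _).trans (hfb i)
    rw [norm_mul]
    by_cases hi : i ∈ S
    · have := mul_le_mul (hfb i) (hS i hi) (norm_nonneg _) hb0
      rw [Set.indicator_of_notMem (Set.notMem_compl_iff.2 (Finset.mem_coe.2 hi))]
      linarith
    · have hc2 : ‖c i - 1‖ ≤ 2 := (norm_sub_le _ _).trans (by rw [norm_one]; linarith [hc i])
      have := mul_le_mul (hfb i) hc2 (norm_nonneg _) hb0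
      rw [Set.indicator_of_mem (Finset.mem_coe.not.2 hi)]
      nlinarith
  have hmaj : Summable fun i => δ * b i + 2 * (S : Set ι)ᶜ.indicator b i :=
    (hb.mul_left δ).add ((hb.indicator _).mul_left 2)
  calc ‖∑' i, f i * (c i - 1)‖ ≤ ∑' i, (δ * b i + 2 * (S : Set ι)ᶜ.indicator b i) :=
        tsum_of_norm_bounded hmaj.hasSum hbound
    _ = _ := by
      rw [hb.mul_left δ |>.tsum_add ((hb.indicator _).mul_left 2), tsum_mul_left, tsum_mul_left,
        tsum_subtype]

theorem LSeries.term_add_mul_I (a : ℕ → ℂ) (s : ℂ) (τ : ℝ) (n : ℕ) :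
    term a (s + τ * I) n = term a s n * exp (↑(τ * -Real.log n) * I) := by
  rcases eq_or_ne n 0 with rfl | hn
  · simp
  have hn' : (n : ℂ) ≠ 0 := Nat.cast_ne_zero.2 hn
  rw [term_of_ne_zero hn, term_of_ne_zero hn, cpow_add _ _ hn', ← div_div, div_eq_mul_inv (_ / _),
    cpow_def_of_ne_zero hn' (τ * I), ← exp_neg, ← ofReal_natCast, ← ofReal_log n.cast_nonneg]
  push_cast
  ring_nf

theorem LSeriesSummable.exists_ge_forall_norm_LSeries_add_mul_I_sub_le {a : ℕ → ℂ} {σ : ℝ}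
    (ha : LSeriesSummable a σ) {ε : ℝ} (hε : 0 < ε) (T : ℝ) :
    ∃ τ ≥ T, ∀ s : ℂ, σ ≤ s.re → ‖LSeries a (s + τ * I) - LSeries a s‖ ≤ ε := by
  set b := fun n => ‖term a σ n‖
  have hb : Summable b := ha.norm
  set B := ∑' n, b n
  have hB : 0 ≤ B := tsum_nonneg fun n => norm_nonneg _
  obtain ⟨S, hS⟩ : ∃ S : Finset ℕ, ∑' n : ↥(S : Set ℕ)ᶜ, b n < ε / 4 :=
    ((tendsto_order.1 (tendsto_tsum_compl_atTop_zero b)).2 _ (by positivity)).exists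
  set δ := ε / (2 * (B + 1))
  have hδ : 0 < δ := by positivity
  obtain ⟨τ, hτT, hτ⟩ :=
    exists_ge_forall_norm_exp_mul_I_sub_one_le (fun n : S => -Real.log n) hδ T
  refine ⟨τ, hτT, fun s hs => ?_⟩
  set c : ℕ → ℂ := fun n => exp (↑(τ * -Real.log n) * I)
  have hsσ : (σ : ℂ).re ≤ s.re := by simpa using hs
  have hsum : Summable (term a s) := ha.of_re_le_re hsσ
  have hsumc : Summable fun n => term a s n * c n :=
    hb.of_norm_bounded fun n => by
      rw [norm_mul, norm_exp_ofReal_mul_I, mul_one]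
      exact norm_term_le_of_re_le_re a hsσ n
  have hdiff : LSeries a (s + τ * I) - LSeries a s = ∑' n, term a s n * (c n - 1) := by
    rw [LSeries, LSeries, tsum_congr (term_add_mul_I a s τ), ← hsumc.tsum_sub hsum]
    exact tsum_congr fun n => by ring
  have hδB : δ * B ≤ ε / 2 := by
    rw [div_mul_eq_mul_div, div_le_div_iff₀ (by positivity) two_pos]
    nlinarith
  rw [hdiff]
  calc _ ≤ δ * B + 2 * ∑' n : ↥(S : Set ℕ)ᶜ, b n :=
        norm_tsum_mul_sub_one_le hb (norm_term_le_of_re_le_re a hsσ)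
          (fun n => (norm_exp_ofReal_mul_I _).le) S hδ.le fun n hn => hτ ⟨n, hn⟩
    _ ≤ ε := by linarith

theorem LSeriesSummable.differentiableOn {a : ℕ → ℂ} {σ : ℝ} (ha : LSeriesSummable a σ) :
    DifferentiableOn ℂ (LSeries a) {s | σ < s.re} :=
  (LSeries_differentiableOn a).mono fun _ hs =>
    ha.abscissaOfAbsConv_le.trans_lt (by exact_mod_cast hs)

theorem LSeriesSummable_of_summable_sq {a : ℕ → ℂ} (ha : Summable fun n => ‖a n‖ ^ 2) {s : ℂ}
    (hs : 1 / 2 < s.re) : LSeriesSummable a s := by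
  have hinv : Summable fun n : ℕ => ((n : ℝ) ^ (2 * s.re))⁻¹ :=
    Real.summable_nat_rpow_inv.2 (by linarith)
  refine ((ha.add hinv).div_const 2).of_norm_bounded fun n => ?_
  rw [norm_term_eq]
  split_ifs with hn
  · positivity
  have hsq : ((n : ℝ) ^ (2 * s.re))⁻¹ = ((n : ℝ) ^ s.re)⁻¹ ^ 2 := by
    rw [mul_comm, Real.rpow_mul n.cast_nonneg, Real.rpow_two, inv_pow]
  rw [hsq, div_eq_mul_inv]
  linarith [two_mul_le_add_sq ‖a n‖ ((n : ℝ) ^ s.re)⁻¹]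

theorem differentiableOn_LSeries_of_summable_sq {a : ℕ → ℂ}
    (ha : Summable fun n => ‖a n‖ ^ 2) : DifferentiableOn ℂ (LSeries a) {s | 1 / 2 < s.re} := by
  have habs : abscissaOfAbsConv a ≤ (1 / 2 : ℝ) :=
    abscissaOfAbsConv_le_of_forall_lt_LSeriesSummable fun y hy =>
      LSeriesSummable_of_summable_sq ha (by simpa using hy)
  exact (LSeries_differentiableOn a).mono fun s hs => habs.trans_lt (by exact_mod_cast hs)

theorem exists_mem_closedBall_eq_zero_of_norm_center_lt {g : ℂ → ℂ} {c : ℂ} {r m : ℝ}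
    (hr : 0 < r) (hg : DiffContOnCl ℂ g (ball c r)) (hm : ∀ z ∈ sphere c r, m ≤ ‖g z‖)
    (hc : ‖g c‖ < m) : ∃ z ∈ closedBall c r, g z = 0 := by
  by_contra! hne
  rw [← closure_ball c hr.ne'] at hne
  have hm0 : 0 < m := (norm_nonneg _).trans_lt hc
  have hinv : ‖(g c)⁻¹‖ ≤ m⁻¹ := by
    refine norm_le_of_forall_mem_frontier_norm_le isBounded_ball (hg.inv hne) (fun z hz => ?_)
      (subset_closure (mem_ball_self hr))
    rw [frontier_ball c hr.ne'] at hz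
    rw [Pi.inv_apply, norm_inv]
    exact inv_anti₀ hm0 (hm z hz)
  rw [norm_inv, inv_le_inv₀ (norm_pos_iff.2 (hne c (subset_closure (mem_ball_self hr)))) hm0]
    at hinv
  exact hc.not_ge hinv

theorem AnalyticAt.exists_lt_forall_mem_sphere_ne_zero {𝕜 E : Type*} [NontriviallyNormedField 𝕜]
    [NormedAddCommGroup E] [NormedSpace 𝕜 E] {f : 𝕜 → E} {c : 𝕜} (hf : AnalyticAt 𝕜 f c)
    (hne : ¬ f =ᶠ[𝓝 c] 0) {ε : ℝ} (hε : 0 < ε) :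
    ∃ r, 0 < r ∧ r < ε ∧ ∀ z ∈ sphere c r, f z ≠ 0 := by
  obtain h0 | hne' := hf.eventually_eq_zero_or_eventually_ne_zero
  · exact absurd h0 hne
  obtain ⟨ρ, hρ, hball⟩ := Metric.eventually_nhds_iff.1 (eventually_nhdsWithin_iff.1 hne')
  refine ⟨min ρ ε / 2, by positivity, by linarith [min_le_right ρ ε, lt_min hρ hε], ?_⟩
  intro z hz
  have hzc : dist z c = min ρ ε / 2 := hz
  refine hball (by linarith [min_le_left ρ ε, lt_min hρ hε]) fun h => ?_
  rw [h, dist_self] at hzc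
  linarith [lt_min hρ hε]

theorem closedBall_subset_setOf_lt_re {c : ℂ} {r σ : ℝ} (h : σ < c.re - r) :
    closedBall c r ⊆ {z | σ < z.re} := fun z hz => by
  have := (abs_le.1 ((abs_re_le_norm (z - c)).trans (mem_closedBall_iff_norm.1 hz))).1
  simp only [sub_re] at this
  show σ < z.re
  linarith

theorem LSeriesSummable.exists_LSeries_add_mul_I_eq_zero {a : ℕ → ℂ} {σ : ℝ}
    (ha : LSeriesSummable a σ) {c : ℂ} {r : ℝ} (hr : 0 < r)
    (hball : closedBall c r ⊆ {z | σ < z.re})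
    (hc : LSeries a c = 0) (hsphere : ∀ z ∈ sphere c r, LSeries a z ≠ 0) (T : ℝ) :
    ∃ τ ≥ T, ∃ z ∈ closedBall c r, LSeries a (z + τ * I) = 0 := by
  have hdiff := ha.differentiableOn
  obtain ⟨z₀, hz₀, hmin⟩ := (isCompact_sphere c r).exists_isMinOn
    (NormedSpace.sphere_nonempty.2 hr.le)
    (hdiff.continuousOn.norm.mono (sphere_subset_closedBall.trans hball))
  set m := ‖LSeries a z₀‖
  have hm : 0 < m := norm_pos_iff.2 (hsphere z₀ hz₀)
  obtain ⟨τ, hτT, hτ⟩ := ha.exists_ge_forall_norm_LSeries_add_mul_I_sub_le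
    (by positivity : 0 < m / 3) T
  have hre : ∀ z ∈ closedBall c r, σ ≤ z.re := fun z hz => (hball hz).le
  set g := fun z => LSeries a (z + τ * I)
  have hg : DifferentiableOn ℂ g {z | σ < z.re} :=
    hdiff.comp (differentiableOn_id.add_const _) fun z hz => by simpa using hz
  refine ⟨τ, hτT, exists_mem_closedBall_eq_zero_of_norm_center_lt hr
    (hg.diffContOnCl_ball hball) (m := 2 * m / 3) (fun z hz => ?_) ?_⟩
  · have h1 := hτ z (hre z (sphere_subset_closedBall hz))
    have h2 : m ≤ ‖LSeries a z‖ := hmin hz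
    linarith [norm_sub_norm_le (LSeries a z) (g z), norm_sub_rev (LSeries a z) (g z)]
  · have h1 := hτ c (hre c (mem_closedBall_self hr.le))
    rw [hc, sub_zero] at h1
    linarith

/-- A nontrivial function in `ℋ²` has either no zeros or infinitely many zeros in the
half-plane `Re s > 1/2`. -/
theorem H2_zero_set_infinite (a : ℕ → ℂ) (ha0 : a 0 = 0)
    (ha : Summable fun n => ‖a n‖ ^ 2)
    (hnontriv : ∃ z : ℂ, 1 / 2 < z.re ∧ (∑' n : ℕ, a n * (n : ℂ) ^ (-z)) ≠ 0)
    (s₀ : ℂ) (hs₀ : 1 / 2 < s₀.re)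
    (hzero : (∑' n : ℕ, a n * (n : ℂ) ^ (-s₀)) = 0) :
    {z : ℂ | 1 / 2 < z.re ∧ (∑' n : ℕ, a n * (n : ℂ) ^ (-z)) = 0}.Infinite := by
  have hL (z : ℂ) : ∑' n : ℕ, a n * (n : ℂ) ^ (-z) = LSeries a z :=
    tsum_congr fun n => (term_def₀ ha0 z n).symm
  simp only [hL] at hnontriv hzero ⊢
  obtain ⟨z₁, hz₁, hz₁ne⟩ := hnontriv
  have hana : AnalyticOnNhd ℂ (LSeries a) {z | 1 / 2 < z.re} :=
    (differentiableOn_LSeries_of_summable_sq ha).analyticOnNhd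
      (isOpen_lt continuous_const continuous_re)
  have hne : ¬ LSeries a =ᶠ[𝓝 s₀] 0 := fun h => hz₁ne <|
    hana.eqOn_zero_of_preconnected_of_eventuallyEq_zero
      (convex_halfSpace_re_gt _).isPreconnected hs₀ h hz₁
  obtain ⟨σ, hσ, hσs₀⟩ := exists_between hs₀
  obtain ⟨r, hr, hrσ, hsphere⟩ :=
    (hana s₀ hs₀).exists_lt_forall_mem_sphere_ne_zero hne (ε := s₀.re - σ) (by linarith)
  have hball := closedBall_subset_setOf_lt_re (c := s₀) (show σ < s₀.re - r by linarith)
  have hsum : LSeriesSummable a σ := LSeriesSummable_of_summable_sq ha (by simpa using hσ)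
  refine Set.Infinite.of_image im (Set.infinite_of_forall_exists_gt fun T => ?_)
  obtain ⟨τ, hτ, z, hz, hz0⟩ :=
    hsum.exists_LSeries_add_mul_I_eq_zero hr hball hzero hsphere (T - s₀.im + r + 1)
  have him := (abs_le.1 ((abs_im_le_norm (z - s₀)).trans (mem_closedBall_iff_norm.1 hz))).1
  refine ⟨(z + τ * I).im, ⟨z + τ * I, ⟨?_, hz0⟩, rfl⟩, ?_⟩
  · rw [add_re, re_ofReal_mul, I_re, mul_zero, add_zero]
    exact hσ.trans (hball hz)
  · simp only [sub_im] at him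
    simp only [add_im, im_ofReal_mul, I_im, mul_one]
    linarith
end
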